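/- arXiv:1607.01319 — 4 statements merged into one kernel-verified Lean document; each statement's English description precedes it below -/
import Mathlib

section
/- Let α ∈ k be nonzero and let A₀ and A₁ be the 3×3 matrices over k[x₀,x₁,x₂] with rows A₀ = ((0, x₁x₂, −x₁²), (−x₂, 0, x₀ + α⁻¹x₁), (x₁, −(x₀+α⁻¹x₁), 0)) and A₁ = ((0, x₀x₂, −x₀²), (−x₂, 0, αx₀ + x₁), (x₀, −(αx₀+x₁), 0)). Then g·A₁·h = A₀, where g = [[α³, α²x₀ − αx₁, α²x₂], [0, 1, 0], [0, 0, −α]] and h = [[1, 0, 0], [α⁻¹, −α⁻², 0], [0, 0, α⁻¹]]. Moreover det g = −α⁴ and det h = −α⁻³. -/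
open MvPolynomial Matrix

section

variable {R : Type*} [CommRing R]

theorem Matrix.det_fin_three_of_upper_triangular (p q r x y z : R) :
    !![p, x, y; 0, q, z; 0, 0, r].det = p * q * r := by
  simp [det_fin_three]

theorem Matrix.det_fin_three_of_lower_triangular (p q r x y z : R) :
    !![p, 0, 0; x, q, 0; y, z, r].det = p * q * r := by
  simp [det_fin_three]

theorem mul_normalForm_mul_eq_normalForm {a b : R} (hab : a * b = 1) (x0 x1 x2 : R) :
    !![a ^ 3, a ^ 2 * x0 - a * x1, a ^ 2 * x2; 0, 1, 0; 0, 0, -a] *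
        !![0, x0 * x2, -(x0 * x0); -x2, 0, a * x0 + x1; x0, -(a * x0 + x1), 0] *
        !![1, 0, 0; b, -b ^ 2, 0; 0, 0, b] =
      !![0, x1 * x2, -(x1 * x1); -x2, 0, x0 + b * x1; x1, -(x0 + b * x1), 0] := by
  simp only [mul_fin_three, mul_zero, mul_neg, zero_add, mul_one, add_zero, neg_add_rev, one_mul,
    zero_mul, neg_zero, neg_mul, neg_neg, EmbeddingLike.apply_eq_iff_eq, vecCons_inj, and_true,
    true_and]
  -- each remaining entry of the difference of the two sides is a multiple of `a * b - 1`
  refine ⟨⟨?_, ?_, ?_⟩, ?_, ?_, ?_⟩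
  · linear_combination (-(a * x1 * x2)) * hab
  · linear_combination (x1 * x2 * (a * b + 1)) * hab
  · linear_combination (-(x1 * x1)) * hab
  · linear_combination x0 * hab
  · linear_combination (a * x0 + x1) * hab
  · linear_combination (-(b * x1 + x0 * (a * b + 1))) * hab

end

theorem transition_between_normal_forms (k : Type*) [Field k] (α : k) (hα : α ≠ 0) :
    let x0 : MvPolynomial (Fin 3) k := X 0
    let x1 : MvPolynomial (Fin 3) k := X 1
    let x2 : MvPolynomial (Fin 3) k := X 2
    let A0 : Matrix (Fin 3) (Fin 3) (MvPolynomial (Fin 3) k) :=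
      !![0, x1 * x2, -(x1 * x1);
         -x2, 0, x0 + C α⁻¹ * x1;
         x1, -(x0 + C α⁻¹ * x1), 0]
    let A1 : Matrix (Fin 3) (Fin 3) (MvPolynomial (Fin 3) k) :=
      !![0, x0 * x2, -(x0 * x0);
         -x2, 0, C α * x0 + x1;
         x0, -(C α * x0 + x1), 0]
    let g : Matrix (Fin 3) (Fin 3) (MvPolynomial (Fin 3) k) :=
      !![C (α ^ 3), C (α ^ 2) * x0 - C α * x1, C (α ^ 2) * x2;
         0, 1, 0;
         0, 0, -(C α)]
    let h : Matrix (Fin 3) (Fin 3) (MvPolynomial (Fin 3) k) :=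
      !![1, 0, 0;
         C α⁻¹, -(C (α⁻¹ ^ 2)), 0;
         0, 0, C α⁻¹]
    g * A1 * h = A0 ∧ g.det = C (-(α ^ 4)) ∧ h.det = C (-(α⁻¹ ^ 3)) := by
  intro x0 x1 x2 A0 A1 g h
  have hαα : (C α : MvPolynomial (Fin 3) k) * C α⁻¹ = 1 := by
    rw [← C_mul, mul_inv_cancel₀ hα, C_1]
  refine ⟨?_, ?_, ?_⟩
  · simp only [g, A1, h, A0, map_pow]
    exact mul_normalForm_mul_eq_normalForm hαα x0 x1 x2
  · rw [det_fin_three_of_upper_triangular, map_neg, map_pow, map_pow]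
    ring
  · rw [det_fin_three_of_lower_triangular, map_neg, map_pow, map_pow]
    ring
end

section
/- With A and f_{A,B} as above, for any point p = (p₀, p₁, p₂) ∈ k³ satisfying x₀(p) = 0 (i.e. p₀ = 0) and w(p) = 0 (i.e. γp₁ + δp₂ = 0), the polynomial f_{A,B} vanishes at p; i.e. every first-order deformation of det along A yields a quartic passing through the common zero of x₀ and w. -/
open MvPolynomial Matrix

/-!
Evaluation at `p` commutes with `det`. Since `w(p) = 0` the row `a₀` evaluates to `0`, and since
`p₀ = 0` the rows `a₁`, `a₂` evaluate to `(-p₂, 0, 0)` and `(p₁, 0, 0)`, multiples of one vector.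
So each of the three determinants has, after evaluation, a zero row or two proportional rows.
-/

namespace Matrix

theorem of_vecCons_map {m α β : Type*} (f : α → β) (u v w : m → α) :
    (of ![u, v, w]).map f = of ![f ∘ u, f ∘ v, f ∘ w] := by
  ext i j; fin_cases i <;> rfl

/-- Multilinearity in rows `i` and `j` reduces this to a matrix with two equal rows. -/
theorem det_eq_zero_of_rows_eq_smul {n R : Type*} [Fintype n] [DecidableEq n] [CommRing R]
    {M : Matrix n n R} {i j : n} (hij : i ≠ j) (v : n → R) (a b : R)
    (hi : M i = a • v) (hj : M j = b • v) : M.det = 0 := by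
  have hM : M = (M.updateRow i (a • v)).updateRow j (b • v) := by
    rw [← hi, ← hj, updateRow_eq_self, updateRow_eq_self]
  rw [hM, det_updateRow_smul, updateRow_comm _ hij, det_updateRow_smul,
    det_zero_of_row_eq hij (by simp [hij.symm]), mul_zero, mul_zero]

end Matrix

theorem fAB_vanishes_at_p_general (k : Type*) [Field k] (γ δ : k)
    (B : Matrix (Fin 3) (Fin 3) (MvPolynomial (Fin 3) k))
    (p : Fin 3 → k) (hp0 : p 0 = 0) (hpw : γ * p 1 + δ * p 2 = 0) :
    let x0 : MvPolynomial (Fin 3) k := X 0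
    let x1 : MvPolynomial (Fin 3) k := X 1
    let x2 : MvPolynomial (Fin 3) k := X 2
    let w : MvPolynomial (Fin 3) k := C γ * x1 + C δ * x2
    let a0 : Fin 3 → MvPolynomial (Fin 3) k := ![0, -x2 * w, x1 * w]
    let a1 : Fin 3 → MvPolynomial (Fin 3) k := ![-x2, 0, x0]
    let a2 : Fin 3 → MvPolynomial (Fin 3) k := ![x1, -x0, 0]
    let fAB : MvPolynomial (Fin 3) k :=
      Matrix.det (Matrix.of ![B 0, a1, a2]) +
      Matrix.det (Matrix.of ![a0, B 1, a2]) +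
      Matrix.det (Matrix.of ![a0, a1, B 2])
    MvPolynomial.eval p fAB = 0 := by
  intro x0 x1 x2 w a0 a1 a2 fAB
  have hw : eval p w = 0 := by simpa [w, x1, x2] using hpw
  have ha0 : eval p ∘ a0 = 0 := by
    ext j; fin_cases j <;> simp [a0, hw]
  have ha1 : eval p ∘ a1 = (-p 2) • Pi.single 0 1 := by
    ext j; fin_cases j <;> simp [a1, x0, x2, hp0]
  have ha2 : eval p ∘ a2 = p 1 • Pi.single 0 1 := by
    ext j; fin_cases j <;> simp [a2, x0, x1, hp0]
  simp only [fAB, map_add, RingHom.map_det, RingHom.mapMatrix_apply, of_vecCons_map, ha0]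
  rw [det_eq_zero_of_rows_eq_smul (i := 1) (j := 2) (by decide) _ _ _ ha1 ha2,
    det_eq_zero_of_row_eq_zero 0 (fun _ => rfl), det_eq_zero_of_row_eq_zero 0 (fun _ => rfl),
    add_zero, add_zero]

theorem fAB_vanishes_at_p (k : Type*) [Field k] (γ δ : k) (hγδ : (γ, δ) ≠ (0, 0))
    (B : Matrix (Fin 3) (Fin 3) (MvPolynomial (Fin 3) k))
    (p : Fin 3 → k) (hp0 : p 0 = 0) (hpw : γ * p 1 + δ * p 2 = 0) :
    let x0 : MvPolynomial (Fin 3) k := X 0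
    let x1 : MvPolynomial (Fin 3) k := X 1
    let x2 : MvPolynomial (Fin 3) k := X 2
    let w : MvPolynomial (Fin 3) k := C γ * x1 + C δ * x2
    let a0 : Fin 3 → MvPolynomial (Fin 3) k := ![0, -x2 * w, x1 * w]
    let a1 : Fin 3 → MvPolynomial (Fin 3) k := ![-x2, 0, x0]
    let a2 : Fin 3 → MvPolynomial (Fin 3) k := ![x1, -x0, 0]
    let fAB : MvPolynomial (Fin 3) k :=
      Matrix.det (Matrix.of ![B 0, a1, a2]) +
      Matrix.det (Matrix.of ![a0, B 1, a2]) +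
      Matrix.det (Matrix.of ![a0, a1, B 2])
    MvPolynomial.eval p fAB = 0 :=
  fAB_vanishes_at_p_general k γ δ B p hp0 hpw
end

section
/- If a = b = c = d = 0, then the linear form x̄₀ = x₀ + αx₁ + βx₂ divides each of the three maximal minors of the 2×3 matrix with rows (−x₂, cx₁, x̄₀) and (x₁, −x̄₀ + ax₁ + bx₂, dx₂); conversely, if the three maximal minors of this matrix have a common linear factor (a nonzero homogeneous degree-1 common divisor), then a = b = c = d = 0. -/
/-!
Write `ℓ = u₀x₀ + u₁x₁ + u₂x₂`. If `ℓ` divides the last two minors, they vanish on the plane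
`ℓ = 0`, which in the coordinates `(x̄₀, x₁, x₂)` reads `u₀x̄₀ + (u₁ - αu₀)x₁ + (u₂ - βu₀)x₂ = 0`.
The plane cannot contain the `x̄₀`-direction, since moving by `t` along it changes the two minors
by `-t x₁` and `t x₂`. So it is the graph of a linear function `x̄₀ = λx₁ + μx₂`, and evaluating at a few
of its points forces `λ = μ = d = 0` and then `a = b = c = 0`.
-/

open MvPolynomial

theorem Finsupp.exists_eq_single_of_degree_eq_one {σ : Type*} {m : σ →₀ ℕ} (h : m.degree = 1) :
    ∃ i, m = Finsupp.single i 1 := by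
  classical
  obtain ⟨i, hi⟩ := Multiset.card_eq_one.mp ((Finsupp.card_toMultiset m).trans h)
  exact ⟨i, by rw [← Finsupp.toMultiset_toFinsupp m, hi, Multiset.toFinsupp_singleton]⟩

namespace MvPolynomial

variable {σ R : Type*} [CommSemiring R]

theorem eval_eq_zero_of_dvd_of_eval_eq_zero {p q : MvPolynomial σ R} {v : σ → R} (h : p ∣ q)
    (hv : eval v p = 0) : eval v q = 0 := by
  obtain ⟨r, rfl⟩ := h
  rw [map_mul, hv, zero_mul]

theorem IsHomogeneous.eq_sum_C_mul_X [Fintype σ] {ℓ : MvPolynomial σ R}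
    (h : ℓ.IsHomogeneous 1) : ℓ = ∑ i, C (coeff (Finsupp.single i 1) ℓ) * X i := by
  classical
  ext m
  simp only [coeff_sum, coeff_C_mul, coeff_X, mul_ite, mul_one, mul_zero]
  by_cases hm : m.degree = 1
  · obtain ⟨i, rfl⟩ := Finsupp.exists_eq_single_of_degree_eq_one hm
    simp [Finsupp.single_left_inj one_ne_zero]
  · rw [h.coeff_eq_zero hm]
    refine (Finset.sum_eq_zero fun i _ => if_neg ?_).symm
    rintro rfl
    exact hm (Finsupp.degree_single i 1)

theorem IsHomogeneous.eval_eq_sum [Fintype σ] {ℓ : MvPolynomial σ R} (h : ℓ.IsHomogeneous 1)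
    (v : σ → R) : eval v ℓ = ∑ i, coeff (Finsupp.single i 1) ℓ * v i := by
  conv_lhs => rw [h.eq_sum_C_mul_X]
  simp

end MvPolynomial

section MinorsOnPlane

variable {K : Type*} [Field K]

theorem plane_coeff_ne_zero_of_minors_vanish {a b c d u₀ u₁ u₂ : K}
    (hu : ¬(u₀ = 0 ∧ u₁ = 0 ∧ u₂ = 0))
    (h : ∀ q p₁ p₂ : K, u₀ * q + u₁ * p₁ + u₂ * p₂ = 0 →
      -d * p₂ ^ 2 - q * p₁ = 0 ∧ p₂ * (q - a * p₁ - b * p₂) - c * p₁ ^ 2 = 0) :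
    u₀ ≠ 0 := by
  rintro rfl
  obtain ⟨f₀, g₀⟩ := h 0 u₂ (-u₁) (by ring)
  obtain ⟨f₁, g₁⟩ := h 1 u₂ (-u₁) (by ring)
  exact hu ⟨rfl, by linear_combination g₀ - g₁, by linear_combination f₀ - f₁⟩

theorem eq_zero_of_minors_vanish_on_plane {a b c d u₀ u₁ u₂ : K}
    (hu : ¬(u₀ = 0 ∧ u₁ = 0 ∧ u₂ = 0))
    (h : ∀ q p₁ p₂ : K, u₀ * q + u₁ * p₁ + u₂ * p₂ = 0 →
      -d * p₂ ^ 2 - q * p₁ = 0 ∧ p₂ * (q - a * p₁ - b * p₂) - c * p₁ ^ 2 = 0) :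
    a = 0 ∧ b = 0 ∧ c = 0 ∧ d = 0 := by
  have hu₀ := plane_coeff_ne_zero_of_minors_vanish hu h
  have hu₁ : u₁ = 0 := by
    have := (h (-u₁) u₀ 0 (by ring)).1
    exact (mul_eq_zero.mp (by linear_combination this : u₁ * u₀ = 0)).resolve_right hu₀
  subst hu₁
  have hd : d = 0 := by
    have := (h (-u₂) 0 u₀ (by ring)).1
    exact (mul_eq_zero.mp (by linear_combination -this : d * u₀ ^ 2 = 0)).resolve_right
      (pow_ne_zero 2 hu₀)
  subst hd
  have hu₂ : u₂ = 0 := by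
    have := (h (-u₂) u₀ u₀ (by ring)).1
    exact (mul_eq_zero.mp (by linear_combination this : u₂ * u₀ = 0)).resolve_right hu₀
  subst hu₂
  have hq : ∀ p₁ p₂ : K, p₂ * (a * p₁ + b * p₂) + c * p₁ ^ 2 = 0 := fun p₁ p₂ => by
    linear_combination -(h 0 p₁ p₂ (by ring)).2
  have hc := hq 1 0
  have hb := hq 0 1
  have ha := hq 1 1
  exact ⟨by linear_combination ha - hb - hc, by linear_combination hb,
    by linear_combination hc, rfl⟩

end MinorsOnPlane

theorem Nprime_equations_general (k : Type*) [Field k]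
    (α β a b c d : k) :
    let x0 : MvPolynomial (Fin 3) k := X 0
    let x1 : MvPolynomial (Fin 3) k := X 1
    let x2 : MvPolynomial (Fin 3) k := X 2
    let xb : MvPolynomial (Fin 3) k := x0 + C α * x1 + C β * x2
    let m0 : MvPolynomial (Fin 3) k :=
      C c * C d * (x1 * x2) + xb * (xb - C a * x1 - C b * x2)
    let m1 : MvPolynomial (Fin 3) k := -(C d) * x2 ^ 2 - xb * x1
    let m2 : MvPolynomial (Fin 3) k :=
      x2 * (xb - C a * x1 - C b * x2) - C c * x1 ^ 2
    ((a = 0 ∧ b = 0 ∧ c = 0 ∧ d = 0) → (xb ∣ m0 ∧ xb ∣ m1 ∧ xb ∣ m2)) ∧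
    ((∃ ℓ : MvPolynomial (Fin 3) k, ℓ ≠ 0 ∧ ℓ.IsHomogeneous 1 ∧
        ℓ ∣ m0 ∧ ℓ ∣ m1 ∧ ℓ ∣ m2) → (a = 0 ∧ b = 0 ∧ c = 0 ∧ d = 0)) := by
  intro x0 x1 x2 xb m0 m1 m2
  refine ⟨?_, ?_⟩
  · rintro ⟨rfl, rfl, rfl, rfl⟩
    refine ⟨⟨xb, ?_⟩, ⟨-x1, ?_⟩, ⟨x2, ?_⟩⟩ <;>
      · simp only [m0, m1, m2, map_zero]
        ring
  · rintro ⟨ℓ, hℓ0, hℓ, -, h₁, h₂⟩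
    set u : Fin 3 → k := fun i => coeff (Finsupp.single i 1) ℓ
    refine eq_zero_of_minors_vanish_on_plane (u₀ := u 0) (u₁ := u 1 - α * u 0)
      (u₂ := u 2 - β * u 0) ?_ fun q p₁ p₂ hp => ?_
    · rintro ⟨h0, h1, h2⟩
      refine hℓ0 (hℓ.eq_sum_C_mul_X.trans ?_)
      simp [Fin.sum_univ_three, u, h0, show u 1 = 0 by simpa [h0] using h1,
        show u 2 = 0 by simpa [h0] using h2]
    · let v : Fin 3 → k := ![q - α * p₁ - β * p₂, p₁, p₂]
      have hv : eval v ℓ = 0 := by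
        rw [hℓ.eval_eq_sum, Fin.sum_univ_three]
        simp only [v, Matrix.cons_val]
        linear_combination hp
      have e₁ := eval_eq_zero_of_dvd_of_eval_eq_zero h₁ hv
      have e₂ := eval_eq_zero_of_dvd_of_eval_eq_zero h₂ hv
      simp only [m1, m2, xb, x0, x1, x2, v, map_add, map_sub, map_neg, map_mul, map_pow, eval_C,
        eval_X, Matrix.cons_val] at e₁ e₂
      exact ⟨by linear_combination e₁, by linear_combination e₂⟩

theorem Nprime_equations (k : Type*) [Field k] [IsAlgClosed k] [CharZero k]
    (α β a b c d : k) :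
    let x0 : MvPolynomial (Fin 3) k := X 0
    let x1 : MvPolynomial (Fin 3) k := X 1
    let x2 : MvPolynomial (Fin 3) k := X 2
    let xb : MvPolynomial (Fin 3) k := x0 + C α * x1 + C β * x2
    let m0 : MvPolynomial (Fin 3) k :=
      C c * C d * (x1 * x2) + xb * (xb - C a * x1 - C b * x2)
    let m1 : MvPolynomial (Fin 3) k := -(C d) * x2 ^ 2 - xb * x1
    let m2 : MvPolynomial (Fin 3) k :=
      x2 * (xb - C a * x1 - C b * x2) - C c * x1 ^ 2
    ((a = 0 ∧ b = 0 ∧ c = 0 ∧ d = 0) → (xb ∣ m0 ∧ xb ∣ m1 ∧ xb ∣ m2)) ∧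
    ((∃ ℓ : MvPolynomial (Fin 3) k, ℓ ≠ 0 ∧ ℓ.IsHomogeneous 1 ∧
        ℓ ∣ m0 ∧ ℓ ∣ m1 ∧ ℓ ∣ m2) → (a = 0 ∧ b = 0 ∧ c = 0 ∧ d = 0)) :=
  Nprime_equations_general k α β a b c d
end

section
/- Let k be a field and R = k[x₀,x₁,x₂]. Fix t ∈ k with t ≠ 0, a linear form w = γx₁ + δx₂, x̄₀ = x₀ + αx₁ + βx₂, and polynomials q₀, q₁, q₂, y₀, y₁, y₂, z₀, z₁, z₂ ∈ R. Then there exist invertible matrices P ∈ GL₅(R) and Q ∈ GL₄(R) such that P·M·Q = M′, where M = A₅ + t·B₅ with A₅ = [[0,0,0,0],[0,0,−wx₂,wx₁],[0,−x₂,0,x̄₀],[0,x₁,−x̄₀,0],[1,0,0,0]] and B₅ = [[0,0,0,0],[0,q₀,q₁,q₂],[0,y₀,y₁,y₂],[0,z₀,z₁,z₂],[0,0,0,0]], and M′ = C₅ + D₅ with C₅ = [[x̄₀,0,0,0],[w,0,0,0],[0,−x₂,0,x̄₀],[0,x₁,−x̄₀,0],[t,0,x₂,−x₁]] and D₅ =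 [[0, x₁y₀+x₂z₀, x₁y₁+x₂z₁, x₁y₂+x₂z₂],[0,q₀,q₁,q₂],[0,ty₀,ty₁,ty₂],[0,tz₀,tz₁,tz₂],[0,0,0,0]]. -/
open MvPolynomial Matrix
set_option maxHeartbeats 4000000

theorem presentation_matrices_equivalent (k : Type*) [Field k]
    (t α β γ δ : k) (ht : t ≠ 0)
    (q0 q1 q2 y0 y1 y2 z0 z1 z2 : MvPolynomial (Fin 3) k) :
    let x0 : MvPolynomial (Fin 3) k := X 0
    let x1 : MvPolynomial (Fin 3) k := X 1
    let x2 : MvPolynomial (Fin 3) k := X 2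
    let w : MvPolynomial (Fin 3) k := C γ * x1 + C δ * x2
    let xb : MvPolynomial (Fin 3) k := x0 + C α * x1 + C β * x2
    let A5 : Matrix (Fin 5) (Fin 4) (MvPolynomial (Fin 3) k) :=
      !![0, 0, 0, 0;
         0, 0, -(w * x2), w * x1;
         0, -x2, 0, xb;
         0, x1, -xb, 0;
         1, 0, 0, 0]
    let B5 : Matrix (Fin 5) (Fin 4) (MvPolynomial (Fin 3) k) :=
      !![0, 0, 0, 0;
         0, q0, q1, q2;
         0, y0, y1, y2;
         0, z0, z1, z2;
         0, 0, 0, 0]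
    let C5 : Matrix (Fin 5) (Fin 4) (MvPolynomial (Fin 3) k) :=
      !![xb, 0, 0, 0;
         w, 0, 0, 0;
         0, -x2, 0, xb;
         0, x1, -xb, 0;
         C t, 0, x2, -x1]
    let D5 : Matrix (Fin 5) (Fin 4) (MvPolynomial (Fin 3) k) :=
      !![0, x1 * y0 + x2 * z0, x1 * y1 + x2 * z1, x1 * y2 + x2 * z2;
         0, q0, q1, q2;
         0, C t * y0, C t * y1, C t * y2;
         0, C t * z0, C t * z1, C t * z2;
         0, 0, 0, 0]
    ∃ (P : Matrix (Fin 5) (Fin 5) (MvPolynomial (Fin 3) k))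
      (Q : Matrix (Fin 4) (Fin 4) (MvPolynomial (Fin 3) k)),
        IsUnit P.det ∧ IsUnit Q.det ∧
        P * (A5 + (C t : MvPolynomial (Fin 3) k) • B5) * Q = C5 + D5 := by
  intro x0 x1 x2 w xb A5 B5 C5 D5
  have hinv : (C t⁻¹ : MvPolynomial (Fin 3) k) * C t = 1 := by
    rw [← C_mul, inv_mul_cancel₀ ht, C_1]
  -- auxiliary matrices
  set Dinv : Matrix (Fin 5) (Fin 5) (MvPolynomial (Fin 3) k) :=
    !![C t⁻¹, 0, 0, 0, 0;
       0, C t⁻¹, 0, 0, 0;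
       0, 0, 1, 0, 0;
       0, 0, 0, 1, 0;
       0, 0, 0, 0, 1] with hDinv
  set Dd : Matrix (Fin 5) (Fin 5) (MvPolynomial (Fin 3) k) :=
    !![C t, 0, 0, 0, 0;
       0, C t, 0, 0, 0;
       0, 0, 1, 0, 0;
       0, 0, 0, 1, 0;
       0, 0, 0, 0, 1] with hDd
  set P0 : Matrix (Fin 5) (Fin 5) (MvPolynomial (Fin 3) k) :=
    !![C t, 0, x1, x2, xb;
       0, 1, 0, 0, w;
       0, 0, 1, 0, 0;
       0, 0, 0, 1, 0;
       0, 0, 0, 0, 1] with hP0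
  set Q : Matrix (Fin 4) (Fin 4) (MvPolynomial (Fin 3) k) :=
    !![C t, 0, x2, -x1;
       0, 1, 0, 0;
       0, 0, 1, 0;
       0, 0, 0, 1] with hQ
  have hDD : Dinv * Dd = 1 := by
    rw [← Matrix.ext_iff]; intro i j
    fin_cases i <;> fin_cases j <;>
      simp [hDinv, hDd, Matrix.mul_apply, Fin.sum_univ_five, Matrix.vecHead, Matrix.vecTail, hinv]
  have key : P0 * (A5 + (C t : MvPolynomial (Fin 3) k) • B5) * Q = Dd * (C5 + D5) := by
    rw [← Matrix.ext_iff]; intro i j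
    fin_cases i <;> fin_cases j <;>
      simp [hP0, hQ, hDd, A5, B5, C5, D5, Matrix.mul_apply, Fin.sum_univ_five, Fin.sum_univ_four,
        Matrix.vecHead, Matrix.vecTail, Matrix.smul_apply, smul_eq_mul] <;> ring
  refine ⟨Dinv * P0, Q, ?_, ?_, ?_⟩
  · rw [Matrix.det_mul]
    have h1 : Dinv.det = C t⁻¹ * C t⁻¹ := by
      simp [hDinv, Matrix.det_succ_row_zero, Fin.sum_univ_succ]
    have h2 : P0.det = C t := by
      simp [hP0, Matrix.det_succ_row_zero, Fin.sum_univ_succ]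
    rw [h1, h2]
    refine IsUnit.mul (IsUnit.mul ?_ ?_) ?_ <;>
      exact (isUnit_iff_ne_zero.mpr (by simp [ht])).map (C : k →+* MvPolynomial (Fin 3) k)
  · have h3 : Q.det = C t := by
      simp [hQ, Matrix.det_succ_row_zero, Fin.sum_univ_succ]
    rw [h3]
    exact (isUnit_iff_ne_zero.mpr ht).map (C : k →+* MvPolynomial (Fin 3) k)
  · calc Dinv * P0 * (A5 + (C t : MvPolynomial (Fin 3) k) • B5) * Q
        = Dinv * (P0 * (A5 + (C t : MvPolynomial (Fin 3) k) • B5) * Q) := by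
          rw [Matrix.mul_assoc, Matrix.mul_assoc, Matrix.mul_assoc]
      _ = Dinv * (Dd * (C5 + D5)) := by rw [key]
      _ = (Dinv * Dd) * (C5 + D5) := by rw [Matrix.mul_assoc]
      _ = C5 + D5 := by rw [hDD, Matrix.one_mul]
end
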